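/- arXiv:2405.03017 — 4 statements merged into one kernel-verified Lean document; each statement's English description precedes it below -/
import Mathlib

section
/- (Outlier-robust order-statistic sandwich.) Let W be a finite multiset of h real numbers with elements listed in nondecreasing order as w_1 ≤ … ≤ w_h, let f ≥ 0 be an integer, and let R be a finite multiset of N real numbers containing a sub-multiset S with S a sub-multiset of W and |R| − |S| ≤ f. Let r_1 ≤ … ≤ r_N be the elements of R in nondecreasing order. Then: (i) for every index j with f < j ≤ N and j − f ≤ h, we have r_j ≥ w_{j−f}; and (ii) for every index j with 1 ≤ j ≤ N − f, we have r_j ≤ w_{h−(N−f)+j}. -/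
/-!
Sorting turns the sub-multiset relation `S ≤ T` into a sublist relation, and the `i`-th entry of a
sorted sublist lies between the `i`-th and the `(i + |T| - |S|)`-th entries of the sorted list.
Applying this to the fault-free part `S` inside both `W` and `R`, with `|R| - |S| ≤ f`, gives the
two bounds.
-/

/-- The `j`-th smallest element (1-indexed) of a finite multiset of reals. -/
noncomputable def mnth (W : Multiset ℝ) (j : ℕ) : ℝ :=
  (W.sort (· ≤ ·)).getD (j - 1) 0

namespace List

variable {α : Type*} [Preorder α] {l₁ l₂ : List α}

theorem Sublist.getElem_le_getElem_of_pairwise (h : l₁ <+ l₂) (hl₂ : l₂.Pairwise (· ≤ ·))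
    {i : ℕ} (hi : i < l₁.length) : l₂[i]'(hi.trans_le h.length_le) ≤ l₁[i] := by
  induction h generalizing i with
  | slnil => simp at hi
  | @cons l₁ l₂ a h ih =>
    have := h.length_le
    calc (a :: l₂)[i]'(by simp; omega) ≤ (a :: l₂)[i + 1]'(by simp; omega) :=
          hl₂.sortedLE.getElem_le_getElem_of_le (by omega)
      _ ≤ l₁[i] := ih hl₂.of_cons hi
  | cons_cons a h ih =>
    cases i with
    | zero => exact le_rfl
    | succ k => exact ih hl₂.of_cons (by simpa using hi)

theorem Sublist.getElem_le_getElem_add_of_pairwise (h : l₁ <+ l₂) (hl₂ : l₂.Pairwise (· ≤ ·))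
    {i : ℕ} (hi : i < l₁.length) :
    l₁[i] ≤ l₂[i + (l₂.length - l₁.length)]'(by have := h.length_le; omega) := by
  induction h generalizing i with
  | slnil => simp at hi
  | @cons l₁ l₂ a h ih =>
    have := h.length_le
    calc l₁[i] ≤ l₂[i + (l₂.length - l₁.length)]'(by omega) := ih hl₂.of_cons hi
      _ = (a :: l₂)[i + ((a :: l₂).length - l₁.length)]'(by simp; omega) := by
        simp only [length_cons, show i + (l₂.length + 1 - l₁.length) =
          i + (l₂.length - l₁.length) + 1 by omega, getElem_cons_succ]
  | @cons_cons l₁ l₂ a h ih =>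
    cases i with
    | zero => exact hl₂.sortedLE.getElem_le_getElem_of_le (hi := by simp) (Nat.zero_le _)
    | succ k => simpa [Nat.add_right_comm] using ih hl₂.of_cons (by simpa using hi)

end List

theorem Multiset.sort_sublist_sort_of_le {α : Type*} [LinearOrder α] {s t : Multiset α}
    (hst : s ≤ t) : (s.sort (· ≤ ·)).Sublist (t.sort (· ≤ ·)) :=
  List.sublist_of_subperm_of_pairwise (by rwa [← Multiset.coe_le, Multiset.sort_eq,
    Multiset.sort_eq]) (Multiset.pairwise_sort _ _) (Multiset.pairwise_sort _ _)

section OrderStatistic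

variable {S T : Multiset ℝ} {i j : ℕ}

theorem mnth_eq_getElem (hj : j - 1 < Multiset.card T) :
    mnth T j = (T.sort (· ≤ ·))[j - 1]'(by rwa [Multiset.length_sort]) :=
  List.getD_eq_getElem ..

theorem mnth_le_mnth (hij : i ≤ j) (hj : j ≤ Multiset.card T) : mnth T i ≤ mnth T j := by
  rcases Nat.eq_zero_or_pos j with rfl | hj₀
  · rw [Nat.le_zero.mp hij]
  rw [mnth_eq_getElem (by omega), mnth_eq_getElem (by omega)]
  exact (Multiset.pairwise_sort T _).sortedLE.getElem_le_getElem_of_le (by omega)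

theorem mnth_le_mnth_of_multiset_le (hST : S ≤ T) (hj₀ : 0 < j) (hj : j ≤ Multiset.card S) :
    mnth T j ≤ mnth S j := by
  have := Multiset.card_le_card hST
  rw [mnth_eq_getElem (by omega), mnth_eq_getElem (by omega)]
  exact (Multiset.sort_sublist_sort_of_le hST).getElem_le_getElem_of_pairwise
    (Multiset.pairwise_sort T _) _

theorem mnth_le_mnth_add_of_multiset_le (hST : S ≤ T) (hj₀ : 0 < j) (hj : j ≤ Multiset.card S) :
    mnth S j ≤ mnth T (j + (Multiset.card T - Multiset.card S)) := by
  have := Multiset.card_le_card hST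
  rw [mnth_eq_getElem (by omega), mnth_eq_getElem (by omega)]
  refine ((Multiset.sort_sublist_sort_of_le hST).getElem_le_getElem_add_of_pairwise
    (Multiset.pairwise_sort T _) (i := j - 1) (by rw [Multiset.length_sort]; omega)).trans_eq
    (getElem_congr_idx ?_)
  simp only [Multiset.length_sort]
  omega

end OrderStatistic

/-- outlier-robust order-statistic sandwich. -/
theorem stmt_5 (W R S : Multiset ℝ) (h N f : ℕ)
    (hWcard : Multiset.card W = h) (hRcard : Multiset.card R = N)
    (hSR : S ≤ R) (hSW : S ≤ W) (hf : N - Multiset.card S ≤ f) :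
    (∀ j : ℕ, f < j → j ≤ N → j - f ≤ h → mnth W (j - f) ≤ mnth R j) ∧
    (∀ j : ℕ, 1 ≤ j → j ≤ N - f → mnth R j ≤ mnth W (h - (N - f) + j)) := by
  have hSh : Multiset.card S ≤ h := hWcard ▸ Multiset.card_le_card hSW
  constructor
  · intro j hfj hjN _
    calc mnth W (j - f) ≤ mnth S (j - f) := mnth_le_mnth_of_multiset_le hSW (by omega) (by omega)
      _ ≤ mnth R (j - f + (N - Multiset.card S)) :=
          hRcard ▸ mnth_le_mnth_add_of_multiset_le hSR (by omega) (by omega)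
      _ ≤ mnth R j := mnth_le_mnth (by omega) (by omega)
  · intro j hj₀ hjN
    calc mnth R j ≤ mnth S j := mnth_le_mnth_of_multiset_le hSR (by omega) (by omega)
      _ ≤ mnth W (j + (h - Multiset.card S)) :=
          hWcard ▸ mnth_le_mnth_add_of_multiset_le hSW (by omega) (by omega)
      _ ≤ mnth W (h - (N - f) + j) := mnth_le_mnth (by omega) (by omega)
end

section
/- (Induction step of Lemma 3, lower bound.) Let n and f be integers with f ≥ 0 and n ≥ 5f + 1, and set N = ⌊(n+3f)/2⌋ + 1. Let W be a finite multiset of h ≥ 2f + 1 real numbers with elements w_1 ≤ … ≤ w_h in nondecreasing order, and let a be a real number with w_1 ≤ a ≤ w_{2f+1}. Let R be a finite multiset of N real numbers that can be decomposed as R = B + P + Q (multiset sum), where |B| ≤ f, P is a sub-multiset of W, and every element of Q is ≥ a. Let r_1 ≤ … ≤ r_N be the elements of R in nondecreasing order. Then at most 3f elements of R are strictly less than a, so r_{3f+1} ≥ a; moreover N − f ≥ 3f + 1, hence r_{f+1} ≥ w_1 and r_{N−f} ≥ a, and the value v = (r_{f+1} + r_{N−f})/2 satisfies v ≥ (w_1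 + a)/2. -/
lemma le_mnth (S : Multiset ℝ) (c : ℝ) (k : ℕ) (hk : k < Multiset.card S)
    (hcnt : Multiset.card (S.filter (fun x => x < c)) ≤ k) : c ≤ mnth S (k + 1) := by
  set l := S.sort (· ≤ ·) with hl
  have hsort : l.Pairwise (· ≤ ·) := S.pairwise_sort _
  have hlen : l.length = Multiset.card S := S.length_sort _
  have hk' : k < l.length := by omega
  have hco : (l : Multiset ℝ) = S := S.sort_eq _
  unfold mnth
  rw [show k + 1 - 1 = k from rfl, List.getD_eq_getElem l 0 hk']
  by_contra hlt
  push_neg at hlt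
  -- all elements of take (k+1) l are < c
  have hall : ∀ x ∈ l.take (k+1), x < c := by
    intro x hx
    rw [List.mem_take_iff_getElem] at hx
    obtain ⟨i, hi, rfl⟩ := hx
    have hi' : i ≤ k := by omega
    have : l[i]'(by omega) ≤ l[k] := by
      rcases lt_or_eq_of_le hi' with h1 | h1
      · have := List.Pairwise.rel_get_of_lt hsort (a := ⟨i, by omega⟩) (b := ⟨k, hk'⟩)
          (by simpa using h1)
        simpa [List.get_eq_getElem] using this
      · subst h1; rfl
    exact lt_of_le_of_lt this hlt
  have hsub : (↑(l.take (k+1)) : Multiset ℝ) ≤ S := by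
    rw [← hco]
    exact ((List.take_sublist _ _).subperm)
  have h1 : (↑(l.take (k+1)) : Multiset ℝ).filter (fun x => x < c) = ↑(l.take (k+1)) := by
    rw [Multiset.filter_eq_self]; exact hall
  have h2 := Multiset.card_le_card (Multiset.filter_le_filter (fun x => x < c) hsub)
  rw [h1] at h2
  simp only [Multiset.coe_card, List.length_take] at h2
  omega

lemma mem_ge_mnth_one (S : Multiset ℝ) (x : ℝ) (hx : x ∈ S) : mnth S 1 ≤ x := by
  have h0 : 0 < (S.sort (· ≤ ·)).length := by
    rw [Multiset.length_sort]; exact Multiset.card_pos_iff_exists_mem.mpr ⟨x, hx⟩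
  unfold mnth
  rw [List.getD_eq_getElem _ 0 h0]
  have hx' : x ∈ S.sort (· ≤ ·) := by rw [Multiset.mem_sort]; exact hx
  obtain ⟨i, hi, rfl⟩ := List.mem_iff_getElem.mp hx'
  rcases Nat.eq_zero_or_pos i with h1 | h1
  · subst h1; rfl
  · have := List.Pairwise.rel_get_of_lt (S.pairwise_sort (· ≤ ·)) (a := ⟨0, h0⟩)
      (b := ⟨i, hi⟩) (by simpa using h1)
    simpa [List.get_eq_getElem] using this

lemma count_lt_of_le_mnth (S : Multiset ℝ) (c : ℝ) (k : ℕ) (hk : k < Multiset.card S)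
    (h : c ≤ mnth S (k + 1)) : Multiset.card (S.filter (fun x => x < c)) ≤ k := by
  set l := S.sort (· ≤ ·) with hl
  have hsort : l.Pairwise (· ≤ ·) := S.pairwise_sort _
  have hlen : l.length = Multiset.card S := Multiset.length_sort _
  have hk' : k < l.length := by omega
  have hco : (↑l : Multiset ℝ) = S := S.sort_eq _
  unfold mnth at h
  rw [show k + 1 - 1 = k from rfl, List.getD_eq_getElem l 0 hk'] at h
  have hmono : ∀ i j (hi : i < l.length) (hj : j < l.length), i ≤ j →
      l[i] ≤ l[j] := by
    intro i j hi hj hij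
    rcases lt_or_eq_of_le hij with h1 | h1
    · have := List.Pairwise.rel_get_of_lt hsort (a := ⟨i, hi⟩) (b := ⟨j, hj⟩)
        (by simpa using h1)
      simpa [List.get_eq_getElem] using this
    · subst h1; rfl
  rw [← hco, Multiset.filter_coe, Multiset.coe_card]
  have hsplit : l.filter (fun x => decide (x < c)) =
      (l.take k).filter (fun x => decide (x < c)) ++
      (l.drop k).filter (fun x => decide (x < c)) := by
    rw [← List.filter_append, List.take_append_drop]
  have hdrop : (l.drop k).filter (fun x => decide (x < c)) = [] := by
    rw [List.filter_eq_nil_iff]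
    intro x hx
    obtain ⟨i, hi, rfl⟩ := List.mem_iff_getElem.mp hx
    rw [List.getElem_drop]
    simp only [decide_eq_true_eq, not_lt]
    refine le_trans h (hmono k (k + i) hk' (by simp at hi; omega) (by omega))
  calc (l.filter (fun x => decide (x < c))).length
      = ((l.take k).filter (fun x => decide (x < c))).length := by rw [hsplit, hdrop]; simp
    _ ≤ (l.take k).length := List.length_filter_le _ _
    _ ≤ k := by simp

/-- induction step of Lemma 3, lower bound. -/
theorem stmt_8 (n f : ℕ) (hn : 5 * f + 1 ≤ n) (N : ℕ)
    (hN : N = (n + 3 * f) / 2 + 1)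
    (W : Multiset ℝ) (h : ℕ) (hWcard : Multiset.card W = h) (hh : 2 * f + 1 ≤ h)
    (a : ℝ) (ha1 : mnth W 1 ≤ a) (ha2 : a ≤ mnth W (2 * f + 1))
    (R B P Q : Multiset ℝ) (hdecomp : R = B + P + Q)
    (hRcard : Multiset.card R = N) (hB : Multiset.card B ≤ f)
    (hP : P ≤ W) (hQ : ∀ x ∈ Q, a ≤ x) :
    Multiset.card (R.filter (fun x => x < a)) ≤ 3 * f ∧
    a ≤ mnth R (3 * f + 1) ∧
    3 * f + 1 ≤ N - f ∧
    mnth W 1 ≤ mnth R (f + 1) ∧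
    a ≤ mnth R (N - f) ∧
    (mnth W 1 + a) / 2 ≤ (mnth R (f + 1) + mnth R (N - f)) / 2 := by
  have hNge : 4 * f + 1 ≤ N := by omega
  -- count of elements of R below a
  have hcount_a : Multiset.card (R.filter (fun x => x < a)) ≤ 3 * f := by
    rw [hdecomp, Multiset.filter_add, Multiset.filter_add]
    have h1 : Multiset.card (B.filter (fun x => x < a)) ≤ f :=
      le_trans (Multiset.card_le_card (Multiset.filter_le _ _)) hB
    have h2 : Multiset.card (P.filter (fun x => x < a)) ≤ 2 * f := by
      refine le_trans (Multiset.card_le_card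
        (Multiset.filter_le_filter _ hP)) ?_
      exact count_lt_of_le_mnth W a (2 * f) (by omega) ha2
    have h3 : Q.filter (fun x => x < a) = 0 := by
      rw [Multiset.filter_eq_nil]
      intro x hx
      exact not_lt.mpr (hQ x hx)
    simp only [Multiset.card_add, h3, Multiset.card_zero]
    omega
  -- count of elements of R below w1
  have hcount_w : Multiset.card (R.filter (fun x => x < mnth W 1)) ≤ f := by
    rw [hdecomp, Multiset.filter_add, Multiset.filter_add]
    have h1 : Multiset.card (B.filter (fun x => x < mnth W 1)) ≤ f :=
      le_trans (Multiset.card_le_card (Multiset.filter_le _ _)) hB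
    have h2 : P.filter (fun x => x < mnth W 1) = 0 := by
      rw [Multiset.filter_eq_nil]
      intro x hx
      exact not_lt.mpr (mem_ge_mnth_one W x (Multiset.mem_of_le hP hx))
    have h3 : Q.filter (fun x => x < mnth W 1) = 0 := by
      rw [Multiset.filter_eq_nil]
      intro x hx
      exact not_lt.mpr (le_trans ha1 (hQ x hx))
    simp only [Multiset.card_add, h2, h3, Multiset.card_zero]
    omega
  have key1 : a ≤ mnth R (3 * f + 1) :=
    le_mnth R a (3 * f) (by omega) hcount_a
  have key2 : mnth W 1 ≤ mnth R (f + 1) :=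
    le_mnth R (mnth W 1) f (by omega) hcount_w
  have key3 : a ≤ mnth R (N - f) := by
    have heq : N - f = (N - f - 1) + 1 := by omega
    rw [heq]
    exact le_mnth R a (N - f - 1) (by omega) (le_trans hcount_a (by omega))
  exact ⟨hcount_a, key1, by omega, key2, key3, by linarith⟩
end

section
/- (Contraction corollary of Lemma 3.) Let x ≤ y ≤ z be real numbers, let h be a positive integer, and define a, A : ℕ → ℝ by a_0 = A_0 = y, a_{k+1} = (a_k + x)/2, and A_{k+1} = (A_k + z)/2. Suppose v_1, …, v_h are real numbers with a_k ≤ v_k ≤ A_k for each k ∈ {1, …, h}. Then every v_k lies in [a_h, A_h], and for all j, k ∈ {1, …, h}, |v_j − v_k| ≤ (1 − 2^{−h}) · (z − x). Moreover, if h ≤ n for a natural number n, then |v_j − v_k| ≤ (1 − 2^{−n}) · (z − x). -/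
/-- contraction corollary of Lemma 3. -/
theorem stmt_12 (x y z : ℝ) (hxy : x ≤ y) (hyz : y ≤ z)
    (h : ℕ) (hh : 0 < h)
    (a A : ℕ → ℝ) (ha0 : a 0 = y) (hA0 : A 0 = y)
    (harec : ∀ k : ℕ, a (k + 1) = (a k + x) / 2)
    (hArec : ∀ k : ℕ, A (k + 1) = (A k + z) / 2)
    (v : ℕ → ℝ) (hv : ∀ k : ℕ, 1 ≤ k → k ≤ h → a k ≤ v k ∧ v k ≤ A k) :
    (∀ k : ℕ, 1 ≤ k → k ≤ h → a h ≤ v k ∧ v k ≤ A h) ∧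
    (∀ j k : ℕ, 1 ≤ j → j ≤ h → 1 ≤ k → k ≤ h →
      |v j - v k| ≤ (1 - (2 : ℝ) ^ (-(h : ℤ))) * (z - x)) ∧
    (∀ n : ℕ, h ≤ n → ∀ j k : ℕ, 1 ≤ j → j ≤ h → 1 ≤ k → k ≤ h →
      |v j - v k| ≤ (1 - (2 : ℝ) ^ (-(n : ℤ))) * (z - x)) := by
  have haf : ∀ k : ℕ, a k = x + (y - x) / 2 ^ k := by
    intro k
    induction k with
    | zero => simp [ha0]
    | succ k ih => rw [harec, ih]; ring
  have hAf : ∀ k : ℕ, A k = z + (y - z) / 2 ^ k := by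
    intro k
    induction k with
    | zero => simp [hA0]
    | succ k ih => rw [hArec, ih]; ring
  have hpow : ∀ k : ℕ, (0 : ℝ) < 2 ^ k := fun k => by positivity
  have hmono : ∀ k : ℕ, k ≤ h → a h ≤ a k ∧ A k ≤ A h := by
    intro k hk
    have h2 : (2 : ℝ) ^ k ≤ 2 ^ h := by
      exact pow_le_pow_right₀ (by norm_num) hk
    constructor
    · rw [haf, haf]
      have : (y - x) / 2 ^ h ≤ (y - x) / 2 ^ k :=
        div_le_div_of_nonneg_left (by linarith) (hpow k) h2
      linarith
    · rw [hAf, hAf]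
      have : (z - y) / 2 ^ h ≤ (z - y) / 2 ^ k :=
        div_le_div_of_nonneg_left (by linarith) (hpow k) h2
      have e1 : (y - z) / 2 ^ k = -((z - y) / 2 ^ k) := by ring
      have e2 : (y - z) / 2 ^ h = -((z - y) / 2 ^ h) := by ring
      linarith [this]
  have hbound : ∀ k : ℕ, 1 ≤ k → k ≤ h → a h ≤ v k ∧ v k ≤ A h := by
    intro k h1 h2
    obtain ⟨hl, hr⟩ := hv k h1 h2
    obtain ⟨hm1, hm2⟩ := hmono k h2
    exact ⟨le_trans hm1 hl, le_trans hr hm2⟩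
  refine ⟨hbound, ?_, ?_⟩
  all_goals
    have key : ∀ n : ℕ, h ≤ n → ∀ j k : ℕ, 1 ≤ j → j ≤ h → 1 ≤ k → k ≤ h →
        |v j - v k| ≤ (1 - (2 : ℝ) ^ (-(n : ℤ))) * (z - x) := by
      intro n hn j k hj1 hj2 hk1 hk2
      obtain ⟨hjl, hjr⟩ := hbound j hj1 hj2
      obtain ⟨hkl, hkr⟩ := hbound k hk1 hk2
      have hd : A h - a h = (1 - (2 : ℝ) ^ (-(h : ℤ))) * (z - x) := by
        rw [haf, hAf, zpow_neg, zpow_natCast]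
        field_simp
        ring
      have hstep : (1 - (2 : ℝ) ^ (-(h : ℤ))) * (z - x) ≤
          (1 - (2 : ℝ) ^ (-(n : ℤ))) * (z - x) := by
        apply mul_le_mul_of_nonneg_right _ (by linarith)
        have : (2 : ℝ) ^ (-(n : ℤ)) ≤ (2 : ℝ) ^ (-(h : ℤ)) := by
          rw [zpow_neg, zpow_neg, zpow_natCast, zpow_natCast]
          exact inv_anti₀ (hpow h) (pow_le_pow_right₀ (by norm_num) hn)
        linarith
      rw [abs_sub_le_iff]
      constructor <;> linarith [hd]
  · exact fun j k hj1 hj2 hk1 hk2 => key h le_rfl j k hj1 hj2 hk1 hk2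
  · exact key
end

section
/- (Purified multi-phase convergence of DAC.) Let n be a positive integer and ε a real number with 0 < ε ≤ 1. Let (V_p)_{p∈ℕ} be a sequence of nonempty finite multisets of real numbers such that ⌊n/2⌋ + 1 ≤ |V_p| ≤ n for every p, every element of V_0 lies in [0, 1], and for every p, every element v of V_{p+1} can be written as v = (min(S) + max(S))/2 for some sub-multiset S of V_p with |S| = ⌊n/2⌋ + 1. Then for every p: (i) every element of V_p lies in [min(V_0), max(V_0)]; (ii) range(V_p) ≤ 2^{−p} · range(V_0); and (iii) if 2^{−p} ≤ ε, then any two elements of V_p differ by at most ε. -/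
/-- The minimum of a (nonempty) multiset of reals. -/
noncomputable def mmin (W : Multiset ℝ) : ℝ := mnth W 1

/-- The maximum of a (nonempty) multiset of reals. -/
noncomputable def mmax (W : Multiset ℝ) : ℝ := mnth W (Multiset.card W)

open Multiset

section SortedAccess

variable {W : Multiset ℝ} {i j : ℕ} {x : ℝ}

lemma mnth_eq_getElem_s16 (hj : 1 ≤ j) (hjW : j ≤ card W) :
    mnth W j = (W.sort (· ≤ ·))[j - 1]'(by rw [length_sort]; omega) :=
  List.getD_eq_getElem _ _ _

lemma mnth_mem (hj : 1 ≤ j) (hjW : j ≤ card W) : mnth W j ∈ W := by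
  rw [mnth_eq_getElem_s16 hj hjW, ← mem_sort (· ≤ ·)]
  exact List.getElem_mem _

lemma mnth_le_mnth_s16 (hi : 1 ≤ i) (hij : i ≤ j) (hjW : j ≤ card W) : mnth W i ≤ mnth W j := by
  rw [mnth_eq_getElem_s16 hi (hij.trans hjW), mnth_eq_getElem_s16 (hi.trans hij) hjW]
  exact (pairwise_sort W _).sortedLE.getElem_le_getElem_of_le (by omega)

lemma exists_mnth_eq (hx : x ∈ W) : ∃ j, 1 ≤ j ∧ j ≤ card W ∧ mnth W j = x := by
  obtain ⟨i, hi, rfl⟩ := List.mem_iff_getElem.1 ((mem_sort (· ≤ ·)).2 hx)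
  rw [length_sort] at hi
  exact ⟨i + 1, by omega, hi, by rw [mnth_eq_getElem_s16 (by omega) hi]; rfl⟩

lemma mmin_mem (hW : W ≠ 0) : mmin W ∈ W :=
  mnth_mem le_rfl (card_pos.2 hW)

lemma mmax_mem (hW : W ≠ 0) : mmax W ∈ W :=
  mnth_mem (card_pos.2 hW) le_rfl

lemma mmin_le (hx : x ∈ W) : mmin W ≤ x := by
  obtain ⟨j, hj, hjW, rfl⟩ := exists_mnth_eq hx
  exact mnth_le_mnth_s16 le_rfl hj hjW

lemma le_mmax (hx : x ∈ W) : x ≤ mmax W := by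
  obtain ⟨j, hj, hjW, rfl⟩ := exists_mnth_eq hx
  exact mnth_le_mnth_s16 hj hjW le_rfl

lemma abs_sub_le_mmax_sub_mmin {y : ℝ} (hx : x ∈ W) (hy : y ∈ W) :
    |x - y| ≤ mmax W - mmin W :=
  abs_sub_le_of_le_of_le (mmin_le hx) (le_mmax hx) (mmin_le hy) (le_mmax hy)

end SortedAccess

namespace Multiset

lemma exists_mem_mem_of_card_lt_card_add_card {α : Type*} [DecidableEq α]
    {S T W : Multiset α} (hS : S ≤ W) (hT : T ≤ W) (hcard : card W < card S + card T) :
    ∃ m, m ∈ S ∧ m ∈ T := by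
  have hunion : card (S ∪ T) ≤ card W := card_le_card (union_le hS hT)
  have hsum : card (S ∪ T) + card (S ∩ T) = card S + card T := by
    rw [← card_add, union_add_inter, card_add]
  obtain ⟨m, hm⟩ := card_pos_iff_exists_mem.1 (show 0 < card (S ∩ T) by omega)
  exact ⟨m, mem_of_le inter_le_left hm, mem_of_le inter_le_right hm⟩

end Multiset

def IsQuorumMidpointStep (k : ℕ) (W W' : Multiset ℝ) : Prop :=
  ∀ v ∈ W', ∃ S ≤ W, card S = k ∧ v = (mmin S + mmax S) / 2

namespace IsQuorumMidpointStep

variable {k : ℕ} {W W' : Multiset ℝ}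

lemma mem_Icc (h : IsQuorumMidpointStep k W W') (hk : 0 < k) {a b : ℝ}
    (hW : ∀ x ∈ W, x ∈ Set.Icc a b) : ∀ x ∈ W', x ∈ Set.Icc a b := by
  intro x hx
  obtain ⟨S, hSW, hcard, rfl⟩ := h x hx
  have hS : S ≠ 0 := by rintro rfl; simp at hcard; omega
  obtain ⟨hmin_a, -⟩ := hW _ (mem_of_le hSW (mmin_mem hS))
  obtain ⟨-, hmax_b⟩ := hW _ (mem_of_le hSW (mmax_mem hS))
  have hmin_max : mmin S ≤ mmax S := mmin_le (mmax_mem hS)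
  constructor <;> linarith

lemma range_le_half (h : IsQuorumMidpointStep k W W') (hk : card W < 2 * k) (hW' : W' ≠ 0) :
    mmax W' - mmin W' ≤ (mmax W - mmin W) / 2 := by
  classical
  obtain ⟨S, hSW, hS, hmax⟩ := h _ (mmax_mem hW')
  obtain ⟨T, hTW, hT, hmin⟩ := h _ (mmin_mem hW')
  have hS0 : S ≠ 0 := by rintro rfl; simp at hS; omega
  have hT0 : T ≠ 0 := by rintro rfl; simp at hT; omega
  obtain ⟨m, hmS, hmT⟩ := exists_mem_mem_of_card_lt_card_add_card hSW hTW (by omega)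
  have h1 : mmin S ≤ m := mmin_le hmS
  have h2 : mmax S ≤ mmax W := le_mmax (mem_of_le hSW (mmax_mem hS0))
  have h3 : m ≤ mmax T := le_mmax hmT
  have h4 : mmin W ≤ mmin T := mmin_le (mem_of_le hTW (mmin_mem hT0))
  rw [hmax, hmin]
  linarith

end IsQuorumMidpointStep

section Phases

variable {k : ℕ} {V : ℕ → Multiset ℝ}

lemma mem_Icc_mmin_mmax_of_isQuorumMidpointStep
    (hstep : ∀ p, IsQuorumMidpointStep k (V p) (V (p + 1))) (hk : 0 < k) (p : ℕ) :
    ∀ x ∈ V p, x ∈ Set.Icc (mmin (V 0)) (mmax (V 0)) := by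
  induction p with
  | zero => exact fun x hx => ⟨mmin_le hx, le_mmax hx⟩
  | succ p ih => exact (hstep p).mem_Icc hk ih

lemma range_le_zpow_mul_of_isQuorumMidpointStep
    (hstep : ∀ p, IsQuorumMidpointStep k (V p) (V (p + 1)))
    (hk : ∀ p, card (V p) < 2 * k) (hne : ∀ p, V p ≠ 0) (p : ℕ) :
    mmax (V p) - mmin (V p) ≤ (2 : ℝ) ^ (-(p : ℤ)) * (mmax (V 0) - mmin (V 0)) := by
  induction p with
  | zero => simp
  | succ p ih =>
    have hhalf : (2 : ℝ) ^ (-((p + 1 : ℕ) : ℤ)) = (2 : ℝ) ^ (-(p : ℤ)) / 2 := by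
      rw [Nat.cast_succ, neg_add, zpow_add₀ two_ne_zero, zpow_neg_one, div_eq_mul_inv]
    rw [hhalf]
    linarith [(hstep p).range_le_half (hk p) (hne (p + 1))]

end Phases

theorem stmt_16_general (n : ℕ) (ε : ℝ)
    (V : ℕ → Multiset ℝ)
    (hne : ∀ p : ℕ, V p ≠ 0)
    (hcard : ∀ p : ℕ, n / 2 + 1 ≤ Multiset.card (V p) ∧ Multiset.card (V p) ≤ n)
    (hinit : ∀ x ∈ V 0, 0 ≤ x ∧ x ≤ 1)
    (hform : ∀ p : ℕ, ∀ v ∈ V (p + 1), ∃ S : Multiset ℝ, S ≤ V p ∧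
      Multiset.card S = n / 2 + 1 ∧ v = (mmin S + mmax S) / 2) :
    ∀ p : ℕ,
      (∀ x ∈ V p, mmin (V 0) ≤ x ∧ x ≤ mmax (V 0)) ∧
      mmax (V p) - mmin (V p) ≤ (2 : ℝ) ^ (-(p : ℤ)) * (mmax (V 0) - mmin (V 0)) ∧
      ((2 : ℝ) ^ (-(p : ℤ)) ≤ ε → ∀ x ∈ V p, ∀ y ∈ V p, |x - y| ≤ ε) := by
  have hstep : ∀ p, IsQuorumMidpointStep (n / 2 + 1) (V p) (V (p + 1)) := hform
  have hquorum : ∀ p, card (V p) < 2 * (n / 2 + 1) := fun p => by have := (hcard p).2; omega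
  have hrange := range_le_zpow_mul_of_isQuorumMidpointStep hstep hquorum hne
  have hrange0 : mmax (V 0) - mmin (V 0) ≤ 1 := by
    linarith [(hinit _ (mmin_mem (hne 0))).1, (hinit _ (mmax_mem (hne 0))).2]
  intro p
  refine ⟨mem_Icc_mmin_mmax_of_isQuorumMidpointStep hstep (Nat.succ_pos _) p, hrange p, ?_⟩
  intro hε x hx y hy
  calc |x - y| ≤ mmax (V p) - mmin (V p) := abs_sub_le_mmax_sub_mmin hx hy
    _ ≤ (2 : ℝ) ^ (-(p : ℤ)) * (mmax (V 0) - mmin (V 0)) := hrange p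
    _ ≤ (2 : ℝ) ^ (-(p : ℤ)) := mul_le_of_le_one_right (by positivity) hrange0
    _ ≤ ε := hε

/-- purified multi-phase convergence of DAC. -/
theorem stmt_16 (n : ℕ) (hn : 0 < n) (ε : ℝ) (hε0 : 0 < ε) (hε1 : ε ≤ 1)
    (V : ℕ → Multiset ℝ)
    (hne : ∀ p : ℕ, V p ≠ 0)
    (hcard : ∀ p : ℕ, n / 2 + 1 ≤ Multiset.card (V p) ∧ Multiset.card (V p) ≤ n)
    (hinit : ∀ x ∈ V 0, 0 ≤ x ∧ x ≤ 1)
    (hform : ∀ p : ℕ, ∀ v ∈ V (p + 1), ∃ S : Multiset ℝ, S ≤ V p ∧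
      Multiset.card S = n / 2 + 1 ∧ v = (mmin S + mmax S) / 2) :
    ∀ p : ℕ,
      (∀ x ∈ V p, mmin (V 0) ≤ x ∧ x ≤ mmax (V 0)) ∧
      mmax (V p) - mmin (V p) ≤ (2 : ℝ) ^ (-(p : ℤ)) * (mmax (V 0) - mmin (V 0)) ∧
      ((2 : ℝ) ^ (-(p : ℤ)) ≤ ε → ∀ x ∈ V p, ∀ y ∈ V p, |x - y| ≤ ε) :=
  stmt_16_general n ε V hne hcard hinit hform
end
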